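/- arXiv:1412.5086 — 3 statements merged into one kernel-verified Lean document; each statement's English description precedes it below -/
import Mathlib

section
/- Let Φ(ρ) = Σ_{j=1}^{N} K_j ρ K_j† be a quantum channel on L(X) with a unique invariant density operator ρ_∞, in the sense that the fixed-point space of Φ within L(X) is one-dimensional and spanned by ρ_∞. Then for any real coefficients c_1, …, c_N, setting m = Σ_j c_j Tr(K_j ρ_∞ K_j†), the operator Y = Σ_j c_j K_j† K_j − m·1_X lies in the image of (Id − Φ†), i.e., there exists L ∈ L(X) with (Id − Φ†)(L) = Σ_j c_j K_j† K_j − m·1_X. -/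
/-!
For the nondegenerate pairing `(A, B) ↦ Tr (A B)` on matrices, `Id − Φ†` is the adjoint of
`Id − Φ`, so in finite dimension its range is the annihilator of `ker (Id − Φ) = span ρ_∞`
(Fredholm alternative). The constant `m` is chosen exactly so that `Tr (Y ρ_∞) = 0`.
-/

open Matrix
open scoped ComplexOrder

namespace LinearMap.BilinForm

variable {K V : Type*} [Field K] [AddCommGroup V] [Module K V] [FiniteDimensional K V]

theorem mem_range_of_isAdjointPair {B : LinearMap.BilinForm K V} (hB : B.Nondegenerate)
    {S T : Module.End K V} (hST : IsAdjointPair B B S T) {y : V}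
    (hy : ∀ x ∈ ker T, B y x = 0) : y ∈ range S := by
  have hy' : B.toDual hB y ∈ (ker T).dualAnnihilator :=
    (Submodule.mem_dualAnnihilator _).2 hy
  rw [← range_dualMap_eq_dualAnnihilator_ker] at hy'
  obtain ⟨D, hD⟩ := hy'
  obtain ⟨x, rfl⟩ := (B.toDual hB).surjective D
  refine ⟨x, (B.toDual hB).injective ?_⟩
  rw [← hD]
  ext z
  exact hST x z

end LinearMap.BilinForm

namespace Matrix

variable {R n ι : Type*} [CommSemiring R] [Fintype n] [Fintype ι]

variable (R n) in
def traceForm : LinearMap.BilinForm R (Matrix n n R) :=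
  (LinearMap.mul R (Matrix n n R)).compr₂ (traceLinearMap n R R)

@[simp]
theorem traceForm_apply (A B : Matrix n n R) : traceForm R n A B = trace (A * B) := rfl

theorem traceForm_nondegenerate : (traceForm R n).Nondegenerate :=
  ⟨fun A hA => ext_iff_trace_mul_right.2 fun B => by simpa using hA B,
    fun B hB => ext_iff_trace_mul_left.2 fun A => by simpa using hB A⟩

def sandwich (X Y : ι → Matrix n n R) : Module.End R (Matrix n n R) :=
  ∑ j, LinearMap.mulRight R (Y j) ∘ₗ LinearMap.mulLeft R (X j)

theorem sandwich_apply (X Y : ι → Matrix n n R) (A : Matrix n n R) :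
    sandwich X Y A = ∑ j, X j * A * Y j := by
  simp [sandwich, LinearMap.sum_apply]

theorem isAdjointPair_traceForm_sandwich (X Y : ι → Matrix n n R) :
    LinearMap.IsAdjointPair (traceForm R n) (traceForm R n) (sandwich X Y) (sandwich Y X) := by
  intro A B
  simp only [traceForm_apply, sandwich_apply, Finset.sum_mul, Finset.mul_sum, trace_sum]
  refine Finset.sum_congr rfl fun j _ => ?_
  simp only [Matrix.mul_assoc]
  rw [trace_mul_comm]
  simp only [Matrix.mul_assoc]

theorem trace_sum_smul_mul_mul (c : ι → R) (X Y : ι → Matrix n n R) (ρ : Matrix n n R) :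
    trace ((∑ j, c j • (Y j * X j)) * ρ) = ∑ j, c j * trace (X j * ρ * Y j) := by
  simp only [Finset.sum_mul, trace_sum, smul_mul_assoc, trace_smul, smul_eq_mul]
  refine Finset.sum_congr rfl fun j _ => ?_
  rw [Matrix.mul_assoc, trace_mul_comm, Matrix.mul_assoc]

end Matrix

theorem poisson_solvable_general
    {n : Type*} [Fintype n] [DecidableEq n] {N : ℕ}
    (K : Fin N → Matrix n n ℂ)
    (ρinf : Matrix n n ℂ) (htr : ρinf.trace = 1)
    (huniq : ∀ A : Matrix n n ℂ, (∑ j, K j * A * (K j)ᴴ) = A →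
      ∃ z : ℂ, A = z • ρinf)
    (c : Fin N → ℝ) :
    ∃ L : Matrix n n ℂ,
      L - ∑ j, (K j)ᴴ * L * K j
        = (∑ j, (c j : ℂ) • ((K j)ᴴ * K j))
          - (∑ j, (c j : ℂ) * (K j * ρinf * (K j)ᴴ).trace) • (1 : Matrix n n ℂ) := by
  set Y := (∑ j, (c j : ℂ) • ((K j)ᴴ * K j))
    - (∑ j, (c j : ℂ) * (K j * ρinf * (K j)ᴴ).trace) • (1 : Matrix n n ℂ)
  set Φ := sandwich K fun j => (K j)ᴴ
  set Φdual := sandwich (fun j => (K j)ᴴ) K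
  have hYρ : trace (Y * ρinf) = 0 := by
    rw [sub_mul, trace_sub, trace_sum_smul_mul_mul, smul_mul_assoc, one_mul, trace_smul, htr,
      smul_eq_mul, mul_one, sub_self]
  have hadj : LinearMap.IsAdjointPair (traceForm ℂ n) (traceForm ℂ n) ⇑(1 - Φdual) ⇑(1 - Φ) :=
    LinearMap.isAdjointPair_one.sub (isAdjointPair_traceForm_sandwich _ _)
  have hY : Y ∈ LinearMap.range (1 - Φdual) := by
    refine LinearMap.BilinForm.mem_range_of_isAdjointPair traceForm_nondegenerate hadj ?_
    intro A hA
    have hfixA : ∑ j, K j * A * (K j)ᴴ = A := by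
      rw [LinearMap.mem_ker, LinearMap.sub_apply, Module.End.one_apply, sandwich_apply,
        sub_eq_zero] at hA
      exact hA.symm
    obtain ⟨z, rfl⟩ := huniq A hfixA
    rw [traceForm_apply, mul_smul_comm, trace_smul, hYρ, smul_zero]
  obtain ⟨L, hL⟩ := hY
  refine ⟨L, ?_⟩
  rw [← hL, LinearMap.sub_apply, Module.End.one_apply, sandwich_apply]

/-- Poisson-equation solvability, Lemma `Lexists`:
let `Φ(ρ) = Σ_j K_j ρ K_jᴴ` be a quantum channel with a unique invariant
density operator `ρ_∞` (the fixed-point space of `Φ` is one-dimensional,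
spanned by `ρ_∞`).  Then for any real coefficients `c_j`, with
`m = Σ_j c_j Tr(K_j ρ_∞ K_jᴴ)`, the operator
`Y = Σ_j c_j K_jᴴ K_j − m·1` lies in the image of `Id − Φ†`, where
`Φ†(B) = Σ_j K_jᴴ B K_j` is the Hilbert–Schmidt adjoint of `Φ`. -/
theorem poisson_solvable
    {n : Type*} [Fintype n] [DecidableEq n] {N : ℕ}
    (K : Fin N → Matrix n n ℂ)
    (hK : ∑ j, (K j)ᴴ * K j = 1)
    (ρinf : Matrix n n ℂ) (hpos : ρinf.PosSemidef) (htr : ρinf.trace = 1)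
    (hfix : ∑ j, K j * ρinf * (K j)ᴴ = ρinf)
    (huniq : ∀ A : Matrix n n ℂ, (∑ j, K j * A * (K j)ᴴ) = A →
      ∃ z : ℂ, A = z • ρinf)
    (c : Fin N → ℝ) :
    ∃ L : Matrix n n ℂ,
      L - ∑ j, (K j)ᴴ * L * K j
        = (∑ j, (c j : ℂ) • ((K j)ᴴ * K j))
          - (∑ j, (c j : ℂ) * (K j * ρinf * (K j)ᴴ).trace) • (1 : Matrix n n ℂ) :=
  poisson_solvable_general K ρinf htr huniq c
end

section
/- Let {K_j} be Kraus operators of a channel Φ on L(X) with unique invariant state ρ_∞, and suppose L ∈ L(X) satisfies (Id − Φ†)(L) = Σ_j c_j K_j† K_j − m·1_X where m = Σ_j c_j Tr(K_j ρ_∞ K_j†). Define f(ρ, x) = Tr(ρ L) + x for ρ a density operator and x ∈ ℝ. Then for every density operator ρ and x ∈ ℝ, f(ρ, x) − Σ_j Tr(K_j ρ K_j†) · f(K_j ρ K_j† / Tr(K_j ρ K_j†), c_j) = x − m, where the sum runs over j with Tr(K_j ρ K_j†) > 0. -/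
open Matrix
open scoped ComplexOrder Classical

/-!
Normalising `K_j ρ K_jᴴ` by its trace and multiplying back by the trace cancels, so the subtracted
sum is `Σ_j Tr(K_j ρ K_jᴴ L) + Σ_j c_j Tr(K_j ρ K_jᴴ)`; the terms with vanishing trace may be added
because a positive semidefinite matrix of trace zero is zero. By duality `Tr(Φ(ρ) L) = Tr(ρ Φ†(L))`
this is `Tr(ρ Φ†(L)) + Tr(ρ Σ_j c_j K_jᴴ K_j)`, and the Poisson equation paired with `ρ`, `Tr ρ = 1`,
turns `Tr(ρ L)` minus it into `-m`.
-/

namespace Matrix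

variable {n 𝕜 R : Type*} [Fintype n]

theorem PosSemidef.trace_mul_trace_inv_smul_mul_add [RCLike 𝕜] [DecidableEq n] {M : Matrix n n 𝕜}
    (hM : M.PosSemidef) (L : Matrix n n 𝕜) (a : 𝕜) :
    M.trace * ((M.trace⁻¹ • M * L).trace + a) = (M * L).trace + a * M.trace := by
  by_cases hM0 : M.trace = 0
  · simp [hM.trace_eq_zero_iff.mp hM0]
  · rw [smul_mul, trace_smul, smul_eq_mul]
    field_simp

theorem trace_mul_conjTranspose_mul_mul [CommSemiring R] [Star R] (K ρ L : Matrix n n R) :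
    (K * ρ * Kᴴ * L).trace = (ρ * (Kᴴ * L * K)).trace := by
  rw [mul_assoc, mul_assoc, trace_mul_comm, mul_assoc, mul_assoc]

theorem trace_mul_conjTranspose [CommSemiring R] [Star R] [DecidableEq n] (K ρ : Matrix n n R) :
    (K * ρ * Kᴴ).trace = (ρ * (Kᴴ * K)).trace := by
  simpa using trace_mul_conjTranspose_mul_mul K ρ 1

end Matrix

theorem poisson_function_identity_general
    {n : Type*} [Fintype n] [DecidableEq n] {N : ℕ}
    (K : Fin N → Matrix n n ℂ)
    (c : Fin N → ℝ)
    (m : ℂ)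
    (L : Matrix n n ℂ)
    (hL : L - ∑ j, (K j)ᴴ * L * K j
        = (∑ j, (c j : ℂ) • ((K j)ᴴ * K j)) - m • (1 : Matrix n n ℂ))
    (f : Matrix n n ℂ → ℝ → ℂ)
    (hf : ∀ ρ x, f ρ x = (ρ * L).trace + (x : ℂ))
    (ρ : Matrix n n ℂ) (hρ : ρ.PosSemidef) (hρtr : ρ.trace = 1) (x : ℝ) :
    f ρ x
      - ∑ j ∈ Finset.univ.filter (fun j => 0 < (K j * ρ * (K j)ᴴ).trace),
          (K j * ρ * (K j)ᴴ).trace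
            * f (((K j * ρ * (K j)ᴴ).trace)⁻¹ • (K j * ρ * (K j)ᴴ)) (c j)
      = (x : ℂ) - m := by
  have hpsd : ∀ j, (K j * ρ * (K j)ᴴ).PosSemidef := fun j => hρ.mul_mul_conjTranspose_same (K j)
  have hterm : ∀ j, (K j * ρ * (K j)ᴴ).trace
        * f (((K j * ρ * (K j)ᴴ).trace)⁻¹ • (K j * ρ * (K j)ᴴ)) (c j)
      = (K j * ρ * (K j)ᴴ * L).trace + (c j : ℂ) * (K j * ρ * (K j)ᴴ).trace := by
    intro j
    rw [hf, (hpsd j).trace_mul_trace_inv_smul_mul_add]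
  have hsum : ∑ j ∈ Finset.univ.filter (fun j => 0 < (K j * ρ * (K j)ᴴ).trace),
        (K j * ρ * (K j)ᴴ).trace
          * f (((K j * ρ * (K j)ᴴ).trace)⁻¹ • (K j * ρ * (K j)ᴴ)) (c j)
      = (ρ * ∑ j, (K j)ᴴ * L * K j).trace + (ρ * ∑ j, (c j : ℂ) • ((K j)ᴴ * K j)).trace := by
    rw [Finset.sum_filter_of_ne fun j _ hj =>
        (hpsd j).trace_nonneg.lt_of_ne' (left_ne_zero_of_mul hj),
      Finset.sum_congr rfl fun j _ => hterm j, Finset.sum_add_distrib]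
    simp only [trace_mul_conjTranspose_mul_mul, trace_mul_conjTranspose,
      Finset.mul_sum, trace_sum, Matrix.mul_smul, trace_smul, smul_eq_mul]
  have hpoisson := congrArg (fun A => (ρ * A).trace) hL
  simp only [Matrix.mul_sub, trace_sub, Matrix.mul_smul, trace_smul, smul_eq_mul, hρtr,
    mul_one] at hpoisson
  rw [hf, hsum]
  linear_combination hpoisson

/-- Lemma `f`: let `L` solve the Poisson equation
`(Id − Φ†)(L) = Σ_j c_j K_jᴴ K_j − m·1` with
`m = Σ_j c_j Tr(K_j ρ_∞ K_jᴴ)`, and define `f(ρ, x) = Tr(ρ L) + x`.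
Then for every density operator `ρ` and `x ∈ ℝ`,
`f(ρ,x) − Σ_j Tr(K_j ρ K_jᴴ) f(K_j ρ K_jᴴ / Tr(K_j ρ K_jᴴ), c_j) = x − m`,
the sum running over the `j` with `Tr(K_j ρ K_jᴴ) > 0`
(this is `(Id − P)f(ρ,x) = x − m` for the trajectory transition operator `P`). -/
theorem poisson_function_identity
    {n : Type*} [Fintype n] [DecidableEq n] {N : ℕ}
    (K : Fin N → Matrix n n ℂ)
    (hK : ∑ j, (K j)ᴴ * K j = 1)
    (ρinf : Matrix n n ℂ) (hposinf : ρinf.PosSemidef) (htrinf : ρinf.trace = 1)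
    (hfix : ∑ j, K j * ρinf * (K j)ᴴ = ρinf)
    (c : Fin N → ℝ)
    (m : ℂ) (hm : m = ∑ j, (c j : ℂ) * (K j * ρinf * (K j)ᴴ).trace)
    (L : Matrix n n ℂ)
    (hL : L - ∑ j, (K j)ᴴ * L * K j
        = (∑ j, (c j : ℂ) • ((K j)ᴴ * K j)) - m • (1 : Matrix n n ℂ))
    (f : Matrix n n ℂ → ℝ → ℂ)
    (hf : ∀ ρ x, f ρ x = (ρ * L).trace + (x : ℂ))
    (ρ : Matrix n n ℂ) (hρ : ρ.PosSemidef) (hρtr : ρ.trace = 1) (x : ℝ) :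
    f ρ x
      - ∑ j ∈ Finset.univ.filter (fun j => 0 < (K j * ρ * (K j)ᴴ).trace),
          (K j * ρ * (K j)ᴴ).trace
            * f (((K j * ρ * (K j)ᴴ).trace)⁻¹ • (K j * ρ * (K j)ᴴ)) (c j)
      = (x : ℂ) - m :=
  poisson_function_identity_general K c m L hL f hf ρ hρ hρtr x
end

section
/- If a trace-preserving positive linear map Φ on L(X) has a one-dimensional fixed point space, then its unique fixed point (normalized to unit trace) can be chosen to be a density operator, and every operator A ∈ L(X) with Tr(ρ_∞ A) = 0 (Hilbert–Schmidt orthogonality to the fixed point of Φ) lies in Im(Id − Φ†). -/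
/-!
Positivity and `ℂ`-linearity make `Φ` commute with taking adjoints, so the fixed space contains a
nonzero self-adjoint `B`. Write `B = B⁺ - B⁻` and let `R` be the support projection of `B⁺`. Trace
preservation gives `Tr((1 - R) Φ(B⁺) (1 - R)) + Tr(R Φ(B⁻) R) = 0`; both are traces of positive
matrices, so both compressions vanish and `Φ(B⁺) = R Φ(B) R = B⁺`. Hence some nonzero positive
matrix, and after normalisation a density matrix `ρ`, is fixed; it spans the one-dimensional fixed
space. For the Hilbert–Schmidt inner product `⟪X, Y⟫ = Tr(Xᴴ Y)` the map `Id - Φ†` is the adjoint of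
`Id - Φ`, so its range is the orthogonal complement of `ker (Id - Φ) = ℂ ρ`.
-/

open Matrix
open scoped ComplexOrder MatrixOrder ComplexStarModule InnerProductSpace

lemma LinearMap.range_eq_orthogonal_ker_of_inner {𝕜 E F : Type*} [RCLike 𝕜] [NormedAddCommGroup E]
    [InnerProductSpace 𝕜 E] [FiniteDimensional 𝕜 E] [NormedAddCommGroup F]
    [InnerProductSpace 𝕜 F] [FiniteDimensional 𝕜 F] {T : E →ₗ[𝕜] F} {S : F →ₗ[𝕜] E}
    (h : ∀ x y, ⟪T x, y⟫_𝕜 = ⟪x, S y⟫_𝕜) : range S = (ker T)ᗮ := by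
  rw [T.orthogonal_ker, (T.eq_adjoint_iff S).mpr h, LinearMap.adjoint_adjoint]

lemma exists_isSelfAdjoint_ne_zero_map_eq {A F : Type*} [AddCommGroup A] [Module ℂ A]
    [StarAddMonoid A] [StarModule ℂ A] [FunLike F A A] [StarHomClass F A A]
    [LinearMapClass F ℂ A A] (f : F) {a : A} (ha : a ≠ 0) (hfa : f a = a) :
    ∃ b : A, IsSelfAdjoint b ∧ b ≠ 0 ∧ f b = b := by
  by_cases hre : (ℜ a : A) = 0
  · refine ⟨ℑ a, (ℑ a).2, fun him => ha ?_, by rw [map_imaginaryPart, hfa]⟩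
    rw [← realPart_add_I_smul_imaginaryPart a, hre, him, smul_zero, add_zero]
  · exact ⟨ℜ a, (ℜ a).2, hre, by rw [map_realPart, hfa]⟩

section Matrix

variable {𝕜 n : Type*} [RCLike 𝕜] [Fintype n] [DecidableEq n]

lemma Matrix.PosSemidef.mul_eq_zero_of_mul_mul_eq_zero {X S : Matrix n n 𝕜} (hX : X.PosSemidef)
    (hS : S.IsHermitian) (h : S * X * S = 0) : X * S = 0 := by
  obtain ⟨C, rfl⟩ := CStarAlgebra.nonneg_iff_eq_star_mul_self.mp hX.nonneg
  rw [star_eq_conjTranspose] at h ⊢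
  have hCS : C * S = 0 := by
    rw [← conjTranspose_mul_self_eq_zero, conjTranspose_mul, hS.eq]
    simpa only [Matrix.mul_assoc] using h
  rw [Matrix.mul_assoc, hCS, Matrix.mul_zero]

lemma Matrix.PosSemidef.eq_of_sub_eq_sub_of_trace_eq {P Q X Y R : Matrix n n 𝕜}
    (hX : X.PosSemidef) (hY : Y.PosSemidef) (hP : P.IsHermitian) (hR : IsStarProjection R)
    (hRP : R * P = P) (hRQ : R * Q = 0) (hXY : X - Y = P - Q) (htr : X.trace = P.trace) :
    X = P := by
  set S := 1 - R with hS_def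
  have hS : IsStarProjection S := hR.one_sub
  have hSXS : (S * X * S).PosSemidef := by
    simpa only [← star_eq_conjTranspose, hS.isSelfAdjoint.star_eq]
      using hX.mul_mul_conjTranspose_same S
  have hRYR : (R * Y * R).PosSemidef := by
    simpa only [← star_eq_conjTranspose, hR.isSelfAdjoint.star_eq]
      using hY.mul_mul_conjTranspose_same R
  have hRY : R * Y = R * X - P := by
    rw [show Y = X - (P - Q) by rw [← hXY, sub_sub_cancel], Matrix.mul_sub, Matrix.mul_sub, hRP,
      hRQ, sub_zero]
  have htrace : (S * X * S).trace + (R * Y * R).trace = 0 := by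
    rw [trace_mul_cycle, hS.isIdempotentElem.eq, trace_mul_cycle, hR.isIdempotentElem.eq, hRY,
      hS_def, Matrix.sub_mul, Matrix.one_mul, trace_sub, trace_sub, htr]
    ring
  obtain ⟨hSXS0, hRYR0⟩ :=
    (add_eq_zero_iff_of_nonneg hSXS.trace_nonneg hRYR.trace_nonneg).mp htrace
  have hXS : X * S = 0 :=
    hX.mul_eq_zero_of_mul_mul_eq_zero hS.isSelfAdjoint (hSXS.trace_eq_zero_iff.mp hSXS0)
  have hSX : S * X = 0 := by
    simpa only [star_mul, star_zero, hX.isHermitian.isSelfAdjoint.star_eq,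
      hS.isSelfAdjoint.star_eq] using congrArg star hXS
  have hPR : P * R = P := by
    simpa only [star_mul, hP.isSelfAdjoint.star_eq, hR.isSelfAdjoint.star_eq]
      using congrArg star hRP
  calc X = R * X * R := by
        rw [hS_def, Matrix.mul_sub, Matrix.mul_one, sub_eq_zero] at hXS
        rw [hS_def, Matrix.sub_mul, Matrix.one_mul, sub_eq_zero] at hSX
        rw [← hSX, ← hXS]
    _ = R * Y * R + R * P * R - R * Q * R := by
        rw [← Matrix.add_mul, ← Matrix.sub_mul, ← Matrix.mul_add, ← Matrix.mul_sub, add_sub_assoc,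
          ← hXY, add_sub_cancel]
    _ = P := by
        rw [hRYR.trace_eq_zero_iff.mp hRYR0, hRP, hPR, hRQ, Matrix.zero_mul, zero_add, sub_zero]

lemma Matrix.exists_isStarProjection_mul_posPart_eq (B : Matrix n n 𝕜) :
    ∃ R : Matrix n n 𝕜, IsStarProjection R ∧ R * B⁺ = B⁺ ∧ R * B⁻ = 0 := by
  have hcont (f : ℝ → ℝ) : ContinuousOn f (spectrum ℝ B) := B.finite_real_spectrum.continuousOn f
  have hpos : B⁺ = cfc (·⁺ : ℝ → ℝ) B := by rw [CFC.posPart_def, cfcₙ_eq_cfc]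
  have hneg : B⁻ = cfc (·⁻ : ℝ → ℝ) B := by rw [CFC.negPart_def, cfcₙ_eq_cfc]
  let χ : ℝ → ℝ := fun x => if 0 < x then 1 else 0
  refine ⟨cfc χ B, ⟨?_, cfc_predicate χ B⟩, ?_, ?_⟩
  · rw [IsIdempotentElem, ← cfc_mul χ χ B (hcont χ) (hcont χ)]
    congr 1; funext x
    by_cases hx : 0 < x <;> simp [χ, hx]
  · rw [hpos, ← cfc_mul χ _ B (hcont χ) (hcont _)]
    congr 1; funext x
    by_cases hx : 0 < x <;> simp [χ, hx, not_lt.mp]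
  · rw [hneg, ← cfc_mul χ _ B (hcont χ) (hcont _), ← cfc_zero ℝ B]
    congr 1; funext x
    by_cases hx : 0 < x
    · simp [χ, hx, hx.le]
    · simp [χ, hx]

lemma Matrix.mem_range_of_forall_trace_conjTranspose_mul_eq_zero
    {T S : Matrix n n 𝕜 →ₗ[𝕜] Matrix n n 𝕜}
    (h : ∀ A B, ((T A)ᴴ * B).trace = (Aᴴ * S B).trace) {B : Matrix n n 𝕜}
    (hB : ∀ A, T A = 0 → (Aᴴ * B).trace = 0) : B ∈ LinearMap.range S := by
  let : NormedAddCommGroup (Matrix n n 𝕜) := toMatrixNormedAddCommGroup 1 PosDef.one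
  let : InnerProductSpace 𝕜 (Matrix n n 𝕜) := toMatrixInnerProductSpace 1 PosDef.one.posSemidef
  have inner_eq : ∀ A B : Matrix n n 𝕜, ⟪A, B⟫_𝕜 = (Aᴴ * B).trace := fun A B => by
    show (B * 1 * Aᴴ).trace = _
    rw [Matrix.mul_one, trace_mul_comm]
  rw [LinearMap.range_eq_orthogonal_ker_of_inner (T := T) (by simpa only [inner_eq] using h)]
  exact fun A hA => (inner_eq A B).trans (hB A hA)
end Matrix

namespace PositiveLinearMap

variable {n : Type*} [Fintype n] [DecidableEq n] (Φ : Matrix n n ℂ →ₚ[ℂ] Matrix n n ℂ)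

lemma map_posPart_eq_of_map_eq (hTP : ∀ A, (Φ A).trace = A.trace) {B : Matrix n n ℂ}
    (hB : IsSelfAdjoint B) (hfix : Φ B = B) : Φ B⁺ = B⁺ := by
  obtain ⟨R, hR, hRP, hRN⟩ := B.exists_isStarProjection_mul_posPart_eq
  refine (Φ.map_nonneg (CFC.posPart_nonneg B)).posSemidef.eq_of_sub_eq_sub_of_trace_eq
    (Φ.map_nonneg (CFC.negPart_nonneg B)).posSemidef
    (CFC.posPart_nonneg B).posSemidef.isHermitian hR hRP hRN ?_ (hTP _)
  rw [← map_sub, CFC.posPart_sub_negPart B hB, hfix]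

lemma exists_nonneg_ne_zero_map_eq (hTP : ∀ A, (Φ A).trace = A.trace) {B : Matrix n n ℂ}
    (hB : B ≠ 0) (hfix : Φ B = B) : ∃ σ : Matrix n n ℂ, 0 ≤ σ ∧ σ ≠ 0 ∧ Φ σ = σ := by
  obtain ⟨H, hH, hH0, hHfix⟩ := exists_isSelfAdjoint_ne_zero_map_eq Φ hB hfix
  have hpos : Φ H⁺ = H⁺ := Φ.map_posPart_eq_of_map_eq hTP hH hHfix
  by_cases hpos0 : H⁺ = 0
  · refine ⟨H⁻, CFC.negPart_nonneg H, fun hneg0 => hH0 ?_, ?_⟩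
    · rw [← CFC.posPart_sub_negPart H hH, hpos0, hneg0, sub_zero]
    · rw [← sub_sub_cancel H⁺ H⁻, CFC.posPart_sub_negPart H hH, map_sub, hpos, hHfix]
  · exact ⟨H⁺, CFC.posPart_nonneg H, hpos0, hpos⟩

lemma exists_posSemidef_trace_eq_one_map_eq (hTP : ∀ A, (Φ A).trace = A.trace)
    {B : Matrix n n ℂ} (hB : B ≠ 0) (hfix : Φ B = B) :
    ∃ ρ : Matrix n n ℂ, ρ.PosSemidef ∧ ρ.trace = 1 ∧ Φ ρ = ρ := by
  obtain ⟨σ, hσ, hσ0, hσfix⟩ := Φ.exists_nonneg_ne_zero_map_eq hTP hB hfix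
  have htr : σ.trace ≠ 0 := mt hσ.posSemidef.trace_eq_zero_iff.mp hσ0
  exact ⟨σ.trace⁻¹ • σ, hσ.posSemidef.smul (inv_nonneg.mpr hσ.posSemidef.trace_nonneg),
    by rw [trace_smul, smul_eq_mul, inv_mul_cancel₀ htr], by rw [map_smul, hσfix]⟩

end PositiveLinearMap

/-- if a trace-preserving positive linear map `Φ` on `L(X)` has a
one-dimensional fixed-point space, then its unique fixed point (normalized to
unit trace) can be chosen to be a density operator `ρ_∞` (spanning the fixed
space), and every `A` with `Tr(ρ_∞ A) = 0` lies in `Im(Id − Φ†)`, where `Ψ = Φ†`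
is the Hilbert–Schmidt adjoint of `Φ`. -/
theorem positive_tp_fixed_point_and_range
    {n : Type*} [Fintype n] [DecidableEq n]
    (Φ Ψ : Matrix n n ℂ →ₗ[ℂ] Matrix n n ℂ)
    (hpos : ∀ A : Matrix n n ℂ, A.PosSemidef → (Φ A).PosSemidef)
    (hTP : ∀ A : Matrix n n ℂ, (Φ A).trace = A.trace)
    (hker : Module.finrank ℂ (LinearMap.ker (LinearMap.id - Φ)) = 1)
    (hadj : ∀ A B : Matrix n n ℂ, ((Φ A)ᴴ * B).trace = (Aᴴ * Ψ B).trace) :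
    ∃ ρinf : Matrix n n ℂ,
      ρinf.PosSemidef ∧ ρinf.trace = 1 ∧ Φ ρinf = ρinf ∧
      (∀ A : Matrix n n ℂ, Φ A = A → ∃ z : ℂ, A = z • ρinf) ∧
      (∀ A : Matrix n n ℂ, (ρinf * A).trace = 0 →
        ∃ L : Matrix n n ℂ, A = L - Ψ L) := by
  have mem_ker_iff (A : Matrix n n ℂ) : A ∈ LinearMap.ker (LinearMap.id - Φ) ↔ Φ A = A := by
    rw [LinearMap.mem_ker, LinearMap.sub_apply, LinearMap.id_apply, sub_eq_zero, eq_comm]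
  obtain ⟨⟨B, hB⟩, hB0, -⟩ := finrank_eq_one_iff'.mp hker
  let Φpos : Matrix n n ℂ →ₚ[ℂ] Matrix n n ℂ := .mk₀ Φ fun A hA => (hpos A hA.posSemidef).nonneg
  obtain ⟨ρ, hρ, hρtr, hρfix⟩ := Φpos.exists_posSemidef_trace_eq_one_map_eq hTP (B := B)
    (by simpa using hB0) ((mem_ker_iff B).mp hB)
  have hρ0 : (⟨ρ, (mem_ker_iff ρ).mpr hρfix⟩ : LinearMap.ker (LinearMap.id - Φ)) ≠ 0 := by
    intro h
    rw [Submodule.mk_eq_zero] at h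
    simp [h] at hρtr
  have fixed_eq_smul (A : Matrix n n ℂ) (hA : Φ A = A) : ∃ z : ℂ, A = z • ρ := by
    obtain ⟨z, hz⟩ := (finrank_eq_one_iff_of_nonzero' _ hρ0).mp hker ⟨A, (mem_ker_iff A).mpr hA⟩
    exact ⟨z, (Subtype.ext_iff.mp hz).symm⟩
  refine ⟨ρ, hρ, hρtr, hρfix, fixed_eq_smul, fun A hA => ?_⟩
  obtain ⟨L, hL⟩ := mem_range_of_forall_trace_conjTranspose_mul_eq_zero
    (T := LinearMap.id - Φ) (S := LinearMap.id - Ψ)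
    (fun X Y => by simp [conjTranspose_sub, Matrix.sub_mul, Matrix.mul_sub, hadj])
    (fun X hX => by
      obtain ⟨z, rfl⟩ := fixed_eq_smul X ((mem_ker_iff X).mp hX)
      rw [conjTranspose_smul, hρ.isHermitian.eq, smul_mul, trace_smul, hA, smul_zero])
  exact ⟨L, hL.symm⟩
end
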